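/- arXiv:0709.2326 — 2 statements merged into one kernel-verified Lean document; each statement's English description precedes it below -/
import Mathlib

section
/- Let n ≥ 1 and let Ω_1, Ω_0, Ω_{−1} be real symmetric 2n×2n matrices, and let J be the 2n×2n real block matrix [[0, −I_n],[I_n, 0]]. Suppose v : (0,∞) → ℝ^{2n} is differentiable and satisfies v′(x) = J (x Ω_1 + Ω_0 + x^{−1} Ω_{−1}) v(x) for all x > 0. Define W(x,y) = ⟨J v(x), v(y)⟩/(x−y) for x,y > 0 with x ≠ y. Then for all such x, y the derivative d/ds W(x+s, y+s) at s = 0 exists and equals −⟨Ω_1 v(x), v(y)⟩ + (1/(xy)) ⟨Ω_{−1} v(x), v(y)⟩. -/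
open Matrix

/-
Along the diagonal the denominator `x - y` of `W` is constant, so only the numerator
`N(s) = ⟨J v(x+s), v(y+s)⟩` has to be differentiated. Since `J² = -1` and `Jᵀ J = 1`, the
equation `v' = J A(x) v` with `A(x) = xΩ₁ + Ω₀ + x⁻¹Ω₋₁` gives
`N'(0) = ⟨(A(y)ᵀ - A(x)) v(x), v(y)⟩`, and by symmetry of the `Ω`'s
`A(y)ᵀ - A(x) = (y - x)Ω₁ + (y⁻¹ - x⁻¹)Ω₋₁`. Dividing by `x - y` gives the claim.
-/

section Calculus

variable {𝕜 ι : Type*} [NontriviallyNormedField 𝕜] [Fintype ι]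
  {f g : 𝕜 → ι → 𝕜} {f' g' : ι → 𝕜} {t : 𝕜}

theorem HasDerivAt.dotProduct (hf : HasDerivAt f f' t) (hg : HasDerivAt g g' t) :
    HasDerivAt (fun s => f s ⬝ᵥ g s) (f' ⬝ᵥ g t + f t ⬝ᵥ g') t := by
  rw [_root_.dotProduct, _root_.dotProduct, ← Finset.sum_add_distrib]
  exact HasDerivAt.fun_sum fun i _ => (hasDerivAt_pi.1 hf i).mul (hasDerivAt_pi.1 hg i)

theorem HasDerivAt.mulVec (M : Matrix ι ι 𝕜) (hf : HasDerivAt f f' t) :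
    HasDerivAt (fun s => M *ᵥ f s) (M *ᵥ f') t :=
  hasDerivAt_pi.2 fun i =>
    HasDerivAt.fun_sum fun j _ => (hasDerivAt_pi.1 hf j).const_mul (M i j)

end Calculus

section Symplectic

variable {𝕜 l : Type*} [NontriviallyNormedField 𝕜] [Fintype l] [DecidableEq l]

theorem J_mulVec_dotProduct_J_mulVec {R : Type*} [CommRing R] (u w : l ⊕ l → R) :
    (J l R *ᵥ u) ⬝ᵥ (J l R *ᵥ w) = u ⬝ᵥ w := by
  rw [dotProduct_mulVec, ← mulVec_transpose, mulVec_mulVec, J_transpose, Matrix.neg_mul,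
    J_squared, neg_neg, one_mulVec]

theorem hasDerivAt_J_mulVec_dotProduct {u w : 𝕜 → l ⊕ l → 𝕜}
    {A B : Matrix (l ⊕ l) (l ⊕ l) 𝕜} {t : 𝕜}
    (hu : HasDerivAt u (J l 𝕜 *ᵥ A *ᵥ u t) t) (hw : HasDerivAt w (J l 𝕜 *ᵥ B *ᵥ w t) t) :
    HasDerivAt (fun s => (J l 𝕜 *ᵥ u s) ⬝ᵥ w s) ((Bᵀ - A) *ᵥ u t ⬝ᵥ w t) t := by
  refine ((hu.mulVec (J l 𝕜)).dotProduct hw).congr_deriv ?_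
  rw [J_mulVec_dotProduct_J_mulVec, mulVec_mulVec, J_squared, neg_mulVec, one_mulVec,
    neg_dotProduct, dotProduct_mulVec, ← mulVec_transpose, sub_mulVec, sub_dotProduct]
  ring

end Symplectic

theorem pencil_transpose_sub_pencil_of_isSymm {𝕜 m : Type*} [Field 𝕜]
    {Ω₁ Ω₀ Ωₘ : Matrix m m 𝕜} (hΩ₁ : Ω₁.IsSymm) (hΩ₀ : Ω₀.IsSymm) (hΩₘ : Ωₘ.IsSymm) (x y : 𝕜) :
    (y • Ω₁ + Ω₀ + y⁻¹ • Ωₘ)ᵀ - (x • Ω₁ + Ω₀ + x⁻¹ • Ωₘ) = (y - x) • Ω₁ + (y⁻¹ - x⁻¹) • Ωₘ := by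
  rw [transpose_add, transpose_add, transpose_smul, transpose_smul, hΩ₁.eq, hΩ₀.eq, hΩₘ.eq]
  module

theorem diagonal_derivative_of_integrable_kernel_general
    (n : ℕ)
    (Ω₁ Ω₀ Ωₘ : Matrix (Fin n ⊕ Fin n) (Fin n ⊕ Fin n) ℝ)
    (hΩ₁symm : Ω₁.IsSymm) (hΩ₀symm : Ω₀.IsSymm) (hΩₘsymm : Ωₘ.IsSymm)
    (J : Matrix (Fin n ⊕ Fin n) (Fin n ⊕ Fin n) ℝ)
    (hJ : J = Matrix.fromBlocks 0 (-1) 1 0)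
    (v : ℝ → (Fin n ⊕ Fin n → ℝ))
    (hode : ∀ x : ℝ, 0 < x →
      HasDerivAt v (J.mulVec ((x • Ω₁ + Ω₀ + x⁻¹ • Ωₘ).mulVec (v x))) x)
    (W : ℝ → ℝ → ℝ)
    (hW : ∀ x y : ℝ, x ≠ y → W x y = (J.mulVec (v x)) ⬝ᵥ (v y) / (x - y)) :
    ∀ x y : ℝ, 0 < x → 0 < y → x ≠ y →
      HasDerivAt (fun s => W (x + s) (y + s))
        (-((Ω₁.mulVec (v x)) ⬝ᵥ (v y)) + (1 / (x * y)) * ((Ωₘ.mulVec (v x)) ⬝ᵥ (v y)))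
        0 := by
  obtain rfl : J = Matrix.J (Fin n) ℝ := hJ
  intro x y hx hy hxy
  have hshift (z : ℝ) (hz : 0 < z) :
      HasDerivAt (fun s => v (z + s)) (J (Fin n) ℝ *ᵥ (z • Ω₁ + Ω₀ + z⁻¹ • Ωₘ) *ᵥ v (z + 0)) 0 :=
    HasDerivAt.comp_const_add z 0 (by rw [add_zero]; exact hode z hz)
  have hN := hasDerivAt_J_mulVec_dotProduct (hshift x hx) (hshift y hy)
  rw [add_zero, add_zero, pencil_transpose_sub_pencil_of_isSymm hΩ₁symm hΩ₀symm hΩₘsymm] at hN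
  have hW_diag : (fun s => W (x + s) (y + s)) =
      fun s => (J (Fin n) ℝ *ᵥ v (x + s)) ⬝ᵥ v (y + s) / (x - y) := by
    funext s
    rw [hW _ _ (by contrapose! hxy; linarith), add_sub_add_right_eq_sub]
  rw [hW_diag]
  refine (hN.div_const (x - y)).congr_deriv ?_
  rw [add_mulVec, add_dotProduct, smul_mulVec, smul_mulVec, smul_dotProduct, smul_dotProduct,
    smul_eq_mul, smul_eq_mul]
  field_simp [sub_ne_zero.2 hxy]
  ring

/-- For `v` solving `v′(x) = J(xΩ₁ + Ω₀ + x⁻¹Ω₋₁)v(x)` on `(0,∞)`, the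
kernel `W(x,y) = ⟨J v(x), v(y)⟩/(x−y)` satisfies
`(∂/∂x + ∂/∂y)W(x,y) = −⟨Ω₁v(x),v(y)⟩ + (1/(xy))⟨Ω₋₁v(x),v(y)⟩`. -/
theorem diagonal_derivative_of_integrable_kernel
    (n : ℕ) (hn : 1 ≤ n)
    (Ω₁ Ω₀ Ωₘ : Matrix (Fin n ⊕ Fin n) (Fin n ⊕ Fin n) ℝ)
    (hΩ₁symm : Ω₁.IsSymm) (hΩ₀symm : Ω₀.IsSymm) (hΩₘsymm : Ωₘ.IsSymm)
    (J : Matrix (Fin n ⊕ Fin n) (Fin n ⊕ Fin n) ℝ)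
    (hJ : J = Matrix.fromBlocks 0 (-1) 1 0)
    (v : ℝ → (Fin n ⊕ Fin n → ℝ))
    (hode : ∀ x : ℝ, 0 < x →
      HasDerivAt v (J.mulVec ((x • Ω₁ + Ω₀ + x⁻¹ • Ωₘ).mulVec (v x))) x)
    (W : ℝ → ℝ → ℝ)
    (hW : ∀ x y : ℝ, x ≠ y → W x y = (J.mulVec (v x)) ⬝ᵥ (v y) / (x - y)) :
    ∀ x y : ℝ, 0 < x → 0 < y → x ≠ y →
      HasDerivAt (fun s => W (x + s) (y + s))
        (-((Ω₁.mulVec (v x)) ⬝ᵥ (v y)) + (1 / (x * y)) * ((Ωₘ.mulVec (v x)) ⬝ᵥ (v y)))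
        0 :=
  diagonal_derivative_of_integrable_kernel_general n Ω₁ Ω₀ Ωₘ hΩ₁symm hΩ₀symm hΩₘsymm J hJ v hode W
    hW
end

section
/- Let n ≥ 1, let α ∈ ℝ, and let Ω_1, Ω_0, Ω_{−1} be real symmetric 2n×2n matrices with Ω_1 positive semidefinite and −Ω_{−1} positive semidefinite. Let J be the 2n×2n real block matrix [[0, −I_n],[I_n, 0]]. Suppose v : (1,∞) → ℝ^{2n} is differentiable and satisfies x v′(x) = J ( x Ω_1 + Ω_0 + α J + x^{−1} Ω_{−1} ) v(x) for all x > 1; that the functions x ↦ x^{α} v(x) and x ↦ x^{α−1} v(x) are bounded and square-integrable on (1,∞) with respect to dx; and that ‖x^{α} v(x)‖ → 0 as x → ∞. Then for all x, y > 1 with x ≠ y: (xy)^{(2α+1)/2} ⟨J v(x), v(y)⟩/(x−y) = ∫_1^∞ [ t^{2α} (xy)^{(2α+1)/2} ⟨Ω_1 v(tx), v(ty)⟩ − t^{2α−2} (xy)^{(2α−1)/2} ⟨Ω_{−1} v(tx), v(ty)⟩ ] dt. -/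
/-!
Fix `x ≠ y` and put `g t = t ^ (2α) ⟨J v(tx), v(ty)⟩`. Because `Jᵀ = -J`, `J² = -1` and the `Ω`s are
symmetric, the equation gives
`g' t = (y - x) (t ^ (2α) ⟨Ω₁ v(tx), v(ty)⟩ - (xy)⁻¹ t ^ (2α - 2) ⟨Ω₋₁ v(tx), v(ty)⟩)`:
the `αJ` term of the system cancels against the derivative of the weight `t ^ (2α)`.
The weighted `L²` hypotheses make this integrable on `(1, ∞)` (Cauchy–Schwarz), and the decay of
`x ^ α v x` makes `g` vanish at infinity, so `∫₁^∞ g' = -g 1`, which is the identity.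
-/

open Matrix MeasureTheory Set Filter Real

section Symplectic
variable {m R : Type*} [DecidableEq m]

theorem transpose_fromBlocks_zero_neg_one_one_zero [Ring R] :
    (fromBlocks 0 (-1) 1 0 : Matrix (m ⊕ m) (m ⊕ m) R)ᵀ = -fromBlocks 0 (-1) 1 0 := by
  rw [fromBlocks_transpose, fromBlocks_neg]
  simp

variable [Fintype m]

theorem fromBlocks_zero_neg_one_one_zero_mul_self [Ring R] :
    (fromBlocks 0 (-1) 1 0 : Matrix (m ⊕ m) (m ⊕ m) R) * fromBlocks 0 (-1) 1 0 = -1 := by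
  rw [fromBlocks_multiply, ← fromBlocks_one, fromBlocks_neg]
  simp

theorem mulVec_dotProduct_add_dotProduct_mulVec_of_symplectic [CommRing R] {J : Matrix m m R}
    (hJT : Jᵀ = -J) (hJJ : J * J = -1) (A B : Matrix m m R) (a b : m → R) :
    J *ᵥ (J *ᵥ (A *ᵥ a)) ⬝ᵥ b + J *ᵥ a ⬝ᵥ J *ᵥ (B *ᵥ b) = (Bᵀ - A) *ᵥ a ⬝ᵥ b := by
  have hJTJ : Jᵀ * J = 1 := by rw [hJT, neg_mul, hJJ, neg_neg]
  rw [mulVec_mulVec, hJJ, dotProduct_mulVec, vecMul_mulVec, hJTJ, vecMul_one,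
    dotProduct_mulVec, ← mulVec_transpose, sub_mulVec, sub_dotProduct, neg_mulVec, one_mulVec,
    neg_dotProduct]
  ring

end Symplectic

section BilinearForm
variable {ι : Type*} [Fintype ι] [DecidableEq ι] (M : Matrix ι ι ℝ)

theorem mulVec_dotProduct_eq_inner (a b : EuclideanSpace ℝ ι) :
    M *ᵥ a ⬝ᵥ b = inner ℝ b (toEuclideanCLM (𝕜 := ℝ) M a) := by
  rw [EuclideanSpace.inner_eq_star_dotProduct]
  simp [dotProduct_comm]

theorem abs_mulVec_dotProduct_le (a b : EuclideanSpace ℝ ι) :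
    |M *ᵥ a ⬝ᵥ b| ≤ ‖toEuclideanCLM (𝕜 := ℝ) M‖ * (‖a‖ * ‖b‖) := by
  rw [mulVec_dotProduct_eq_inner]
  calc _ ≤ ‖b‖ * ‖toEuclideanCLM (𝕜 := ℝ) M a‖ := abs_real_inner_le_norm _ _
    _ ≤ ‖b‖ * (‖toEuclideanCLM (𝕜 := ℝ) M‖ * ‖a‖) := by
      gcongr; exact ContinuousLinearMap.le_opNorm _ _
    _ = _ := by ring

theorem HasDerivAt.mulVec_dotProduct {u w : ℝ → EuclideanSpace ℝ ι} {u' w' : EuclideanSpace ℝ ι}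
    {t : ℝ} (hu : HasDerivAt u u' t) (hw : HasDerivAt w w' t) :
    HasDerivAt (fun s => M *ᵥ u s ⬝ᵥ w s) (M *ᵥ u' ⬝ᵥ w t + M *ᵥ u t ⬝ᵥ w') t := by
  simp only [mulVec_dotProduct_eq_inner]
  exact hw.inner ℝ ((toEuclideanCLM (𝕜 := ℝ) M).hasFDerivAt.comp_hasDerivAt t hu)

theorem ContinuousOn.mulVec_dotProduct {u w : ℝ → EuclideanSpace ℝ ι} {s : Set ℝ}
    (hu : ContinuousOn u s) (hw : ContinuousOn w s) :
    ContinuousOn (fun t => M *ᵥ u t ⬝ᵥ w t) s := by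
  simp only [mulVec_dotProduct_eq_inner]
  exact hw.inner ((toEuclideanCLM (𝕜 := ℝ) M).continuous.comp_continuousOn hu)

theorem abs_rpow_mul_mulVec_dotProduct_le (a b : EuclideanSpace ℝ ι) {β t x y : ℝ}
    (ht : 0 < t) (hx : 0 < x) (hy : 0 < y) :
    |t ^ (2 * β) * (M *ᵥ a ⬝ᵥ b)| ≤
      ‖toEuclideanCLM (𝕜 := ℝ) M‖ * (x * y) ^ (-β) * (‖(t * x) ^ β • a‖ * ‖(t * y) ^ β • b‖) := by
  have hscale : (x * y) ^ (-β) * (‖(t * x) ^ β • a‖ * ‖(t * y) ^ β • b‖) =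
      t ^ (2 * β) * (‖a‖ * ‖b‖) := by
    rw [norm_smul, norm_smul, norm_of_nonneg (by positivity), norm_of_nonneg (by positivity),
      rpow_neg (by positivity), mul_rpow ht.le hx.le, mul_rpow ht.le hy.le, mul_rpow hx.le hy.le,
      mul_comm 2 β, rpow_mul ht.le, rpow_two]
    field_simp
  rw [mul_assoc _ ((x * y) ^ (-β)), hscale, abs_mul, abs_of_pos (rpow_pos_of_pos ht _)]
  calc _ ≤ t ^ (2 * β) * (‖toEuclideanCLM (𝕜 := ℝ) M‖ * (‖a‖ * ‖b‖)) := by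
        gcongr; exact abs_mulVec_dotProduct_le M a b
    _ = _ := by ring

end BilinearForm

section WeightedKernel
variable {ι : Type*} [Fintype ι] [DecidableEq ι] (M : Matrix ι ι ℝ) {v : ℝ → EuclideanSpace ℝ ι}
  {β x y : ℝ}

theorem integrableOn_rpow_mul_mulVec_dotProduct_comp_mul (hv : ContinuousOn v (Ioi 1))
    (hL2 : IntegrableOn (fun s => ‖s ^ β • v s‖ ^ 2) (Ioi 1)) (hx : 1 ≤ x) (hy : 1 ≤ y) :
    IntegrableOn (fun t => t ^ (2 * β) * (M *ᵥ v (t * x) ⬝ᵥ v (t * y))) (Ioi 1) := by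
  have hL2_comp {z : ℝ} (hz : 1 ≤ z) :
      IntegrableOn (fun t => ‖(t * z) ^ β • v (t * z)‖ ^ 2) (Ioi 1) :=
    (integrableOn_Ioi_comp_mul_right_iff (fun s => ‖s ^ β • v s‖ ^ 2) 1 (by positivity)).mpr
      (hL2.mono_set (Ioi_subset_Ioi (by linarith)))
  have hmeas : ContinuousOn (fun t => t ^ (2 * β) * (M *ᵥ v (t * x) ⬝ᵥ v (t * y))) (Ioi 1) := by
    have hcomp {z : ℝ} (hz : 1 ≤ z) : ContinuousOn (fun t => v (t * z)) (Ioi 1) :=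
      hv.comp (continuousOn_id.mul continuousOn_const) fun t (ht : 1 < t) =>
        show 1 < t * z by nlinarith
    exact (continuousOn_id.rpow_const fun t ht => Or.inl (by simp at ht; positivity)).mul
      ((hcomp hx).mulVec_dotProduct M (hcomp hy))
  -- `2 P Q ≤ P² + Q²` turns the product of the two weighted norms into a sum of integrable squares
  refine Integrable.mono' (((hL2_comp hx).add (hL2_comp hy)).const_mul
    (‖toEuclideanCLM (𝕜 := ℝ) M‖ * (x * y) ^ (-β) / 2)) (hmeas.aestronglyMeasurable
    measurableSet_Ioi) ((ae_restrict_iff' measurableSet_Ioi).mpr (.of_forall fun t ht => ?_))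
  have ht : 0 < t := by simp at ht; positivity
  rw [Real.norm_eq_abs]
  refine (abs_rpow_mul_mulVec_dotProduct_le M _ _ ht (zero_lt_one.trans_le hx)
    (zero_lt_one.trans_le hy)).trans ?_
  simp only [Pi.add_apply]
  have hamgm := two_mul_le_add_sq ‖(t * x) ^ β • v (t * x)‖ ‖(t * y) ^ β • v (t * y)‖
  have hC : 0 ≤ ‖toEuclideanCLM (𝕜 := ℝ) M‖ * (x * y) ^ (-β) := by positivity
  nlinarith

theorem tendsto_rpow_mul_mulVec_dotProduct_comp_mul_atTop
    (hdecay : Tendsto (fun s => ‖s ^ β • v s‖) atTop (nhds 0)) (hx : 0 < x) (hy : 0 < y) :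
    Tendsto (fun t => t ^ (2 * β) * (M *ᵥ v (t * x) ⬝ᵥ v (t * y))) atTop (nhds 0) := by
  have hprod : Tendsto (fun t => ‖toEuclideanCLM (𝕜 := ℝ) M‖ * (x * y) ^ (-β) *
      (‖(t * x) ^ β • v (t * x)‖ * ‖(t * y) ^ β • v (t * y)‖)) atTop (nhds 0) := by
    simpa using ((hdecay.comp (tendsto_id.atTop_mul_const hx)).mul
      (hdecay.comp (tendsto_id.atTop_mul_const hy))).const_mul _
  refine squeeze_zero_norm' ?_ hprod
  filter_upwards [eventually_gt_atTop 0] with t ht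
  exact abs_rpow_mul_mulVec_dotProduct_le M _ _ ht hx hy

end WeightedKernel

section HamiltonianSystem
variable {ι : Type*} {J : Matrix ι ι ℝ}

theorem transpose_sub_hamiltonian (hJT : Jᵀ = -J) {Ω₁ Ω₀ Ωₘ : Matrix ι ι ℝ} (h₁ : Ω₁.IsSymm)
    (h₀ : Ω₀.IsSymm) (hₘ : Ωₘ.IsSymm) (α x y : ℝ) :
    (y • Ω₁ + Ω₀ + α • J + y⁻¹ • Ωₘ)ᵀ - (x • Ω₁ + Ω₀ + α • J + x⁻¹ • Ωₘ) =
      (y - x) • Ω₁ - (2 * α) • J + (y⁻¹ - x⁻¹) • Ωₘ := by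
  simp only [transpose_add, transpose_smul, h₁.eq, h₀.eq, hₘ.eq, hJT]
  module

variable [Fintype ι] [DecidableEq ι] {v : ℝ → EuclideanSpace ℝ ι}

theorem hasDerivAt_mulVec_dotProduct_comp_mul (hJT : Jᵀ = -J) (hJJ : J * J = -1)
    {A B : Matrix ι ι ℝ} {t x y : ℝ} (hx : x ≠ 0) (hy : y ≠ 0)
    (hvx : HasDerivAt v (WithLp.toLp 2 ((t * x)⁻¹ • (J *ᵥ (A *ᵥ v (t * x))))) (t * x))
    (hvy : HasDerivAt v (WithLp.toLp 2 ((t * y)⁻¹ • (J *ᵥ (B *ᵥ v (t * y))))) (t * y)) :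
    HasDerivAt (fun s => J *ᵥ v (s * x) ⬝ᵥ v (s * y))
      (t⁻¹ * ((Bᵀ - A) *ᵥ v (t * x) ⬝ᵥ v (t * y))) t := by
  have hscale {z : ℝ} (hz : z ≠ 0) : z * (t * z)⁻¹ = t⁻¹ := by
    rw [mul_inv, mul_left_comm, mul_inv_cancel₀ hz, mul_one]
  refine ((hvx.scomp t (hasDerivAt_mul_const x)).mulVec_dotProduct J
    (hvy.scomp t (hasDerivAt_mul_const y))).congr_deriv ?_
  rw [← mulVec_dotProduct_add_dotProduct_mulVec_of_symplectic hJT hJJ]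
  simp only [Function.comp_apply, WithLp.ofLp_smul, smul_smul, hscale hx, hscale hy, mulVec_smul,
    smul_dotProduct, dotProduct_smul, smul_eq_mul, mul_add]

theorem hasDerivAt_rpow_mul_mulVec_dotProduct_comp_mul (hJT : Jᵀ = -J) (hJJ : J * J = -1)
    {Ω₁ Ω₀ Ωₘ : Matrix ι ι ℝ} (h₁ : Ω₁.IsSymm) (h₀ : Ω₀.IsSymm) (hₘ : Ωₘ.IsSymm) {α : ℝ}
    (hode : ∀ s : ℝ, 1 < s → HasDerivAt v
      (WithLp.toLp 2 (s⁻¹ • (J *ᵥ ((s • Ω₁ + Ω₀ + α • J + s⁻¹ • Ωₘ) *ᵥ v s)))) s)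
    {t x y : ℝ} (ht : 0 < t) (hx : 1 < t * x) (hy : 1 < t * y) :
    HasDerivAt (fun s => s ^ (2 * α) * (J *ᵥ v (s * x) ⬝ᵥ v (s * y)))
      ((y - x) * (t ^ (2 * α) * (Ω₁ *ᵥ v (t * x) ⬝ᵥ v (t * y)) -
        (x * y)⁻¹ * (t ^ (2 * α - 2) * (Ωₘ *ᵥ v (t * x) ⬝ᵥ v (t * y))))) t := by
  have hx0 : x ≠ 0 := by rintro rfl; simp at hx; linarith
  have hy0 : y ≠ 0 := by rintro rfl; simp at hy; linarith
  have hW := hasDerivAt_mulVec_dotProduct_comp_mul hJT hJJ hx0 hy0 (hode _ hx) (hode _ hy)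
  rw [transpose_sub_hamiltonian hJT h₁ h₀ hₘ] at hW
  refine ((hasDerivAt_rpow_const (p := 2 * α) (Or.inl ht.ne')).mul hW).congr_deriv ?_
  simp only [add_mulVec, sub_mulVec, smul_mulVec, add_dotProduct, sub_dotProduct,
    smul_dotProduct, smul_eq_mul]
  rw [rpow_sub ht, rpow_sub ht, rpow_one, rpow_two]
  field_simp
  ring

end HamiltonianSystem

theorem integrable_kernel_multiplicative_hankel_factorization_general
    (n : ℕ) (α : ℝ)
    (Ω₁ Ω₀ Ωₘ : Matrix (Fin n ⊕ Fin n) (Fin n ⊕ Fin n) ℝ)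
    (hΩ₁symm : Ω₁.IsSymm) (hΩ₀symm : Ω₀.IsSymm) (hΩₘsymm : Ωₘ.IsSymm)
    (J : Matrix (Fin n ⊕ Fin n) (Fin n ⊕ Fin n) ℝ)
    (hJ : J = Matrix.fromBlocks 0 (-1) 1 0)
    (v : ℝ → EuclideanSpace ℝ (Fin n ⊕ Fin n))
    (hode : ∀ x : ℝ, 1 < x →
      HasDerivAt v
        (WithLp.toLp 2 (x⁻¹ • (J.mulVec ((x • Ω₁ + Ω₀ + α • J + x⁻¹ • Ωₘ).mulVec (v x))))) x)
    (hL2 : IntegrableOn (fun x : ℝ => ‖x ^ α • v x‖ ^ 2) (Ioi (1 : ℝ)))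
    (hL2' : IntegrableOn (fun x : ℝ => ‖x ^ (α - 1) • v x‖ ^ 2) (Ioi (1 : ℝ)))
    (hdecay : Tendsto (fun x : ℝ => ‖x ^ α • v x‖) atTop (nhds 0)) :
    ∀ x y : ℝ, 1 < x → 1 < y → x ≠ y →
      (x * y) ^ ((2 * α + 1) / 2) * ((J.mulVec (v x)) ⬝ᵥ (v y)) / (x - y) =
        ∫ t in Ioi (1 : ℝ),
          (t ^ (2 * α) * (x * y) ^ ((2 * α + 1) / 2) *
              ((Ω₁.mulVec (v (t * x))) ⬝ᵥ (v (t * y)))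
            - t ^ (2 * α - 2) * (x * y) ^ ((2 * α - 1) / 2) *
              ((Ωₘ.mulVec (v (t * x))) ⬝ᵥ (v (t * y)))) := by
  intro x y hx hy hxy
  have hJT : Jᵀ = -J := hJ ▸ transpose_fromBlocks_zero_neg_one_one_zero
  have hJJ : J * J = -1 := hJ ▸ fromBlocks_zero_neg_one_one_zero_mul_self
  have hv : ContinuousOn v (Ioi 1) := fun s hs => (hode s hs).continuousAt.continuousWithinAt
  set f : ℝ → ℝ := fun t => t ^ (2 * α) * (Ω₁ *ᵥ v (t * x) ⬝ᵥ v (t * y)) -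
    (x * y)⁻¹ * (t ^ (2 * α - 2) * (Ωₘ *ᵥ v (t * x) ⬝ᵥ v (t * y)))
  have hderiv (t : ℝ) (ht : 1 ≤ t) :
      HasDerivAt (fun s => s ^ (2 * α) * (J *ᵥ v (s * x) ⬝ᵥ v (s * y))) ((y - x) * f t) t :=
    hasDerivAt_rpow_mul_mulVec_dotProduct_comp_mul hJT hJJ hΩ₁symm hΩ₀symm hΩₘsymm hode
      (by positivity) (by nlinarith) (by nlinarith)
  have hf : IntegrableOn f (Ioi 1) := by
    refine (integrableOn_rpow_mul_mulVec_dotProduct_comp_mul Ω₁ hv hL2 hx.le hy.le).sub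
      (Integrable.const_mul ?_ _)
    rw [show 2 * α - 2 = 2 * (α - 1) by ring]
    exact integrableOn_rpow_mul_mulVec_dotProduct_comp_mul Ωₘ hv hL2' hx.le hy.le
  have hFTC := integral_Ioi_of_hasDerivAt_of_tendsto
    (hderiv 1 le_rfl).continuousAt.continuousWithinAt (fun t ht => hderiv t (le_of_lt ht))
    (hf.const_mul (y - x))
    (tendsto_rpow_mul_mulVec_dotProduct_comp_mul_atTop J hdecay (by positivity) (by positivity))
  have hexp : (x * y) ^ ((2 * α - 1) / 2) = (x * y) ^ ((2 * α + 1) / 2) * (x * y)⁻¹ := by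
    rw [← rpow_neg_one, ← rpow_add (by positivity)]; ring_nf
  have hyx : y - x ≠ 0 := sub_ne_zero.mpr hxy.symm
  calc _ = (x * y) ^ ((2 * α + 1) / 2) / (y - x) * ∫ t in Ioi 1, (y - x) * f t := by
        rw [hFTC, one_rpow, one_mul, one_mul, one_mul]
        field_simp
        ring
    _ = _ := by
      rw [← integral_const_mul]
      congr 1
      funext t
      rw [hexp]
      simp only [f]
      field_simp

/-- Factorization of the kernel
`(xy)^{(2α+1)/2}⟨J v(x), v(y)⟩/(x−y)` arising from the differential equation
`x v′(x) = J(xΩ₁ + Ω₀ + αJ + x⁻¹Ω₋₁)v(x)` on `(1,∞)`, with `Ω₁ ⪰ 0`, `−Ω₋₁ ⪰ 0`,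
as the kernel of `Γ_ψ*Γ_ψ` for a multiplicative Hankel operator. -/
theorem integrable_kernel_multiplicative_hankel_factorization
    (n : ℕ) (hn : 1 ≤ n) (α : ℝ)
    (Ω₁ Ω₀ Ωₘ : Matrix (Fin n ⊕ Fin n) (Fin n ⊕ Fin n) ℝ)
    (hΩ₁symm : Ω₁.IsSymm) (hΩ₀symm : Ω₀.IsSymm) (hΩₘsymm : Ωₘ.IsSymm)
    (hΩ₁pos : Ω₁.PosSemidef) (hΩₘneg : (-Ωₘ).PosSemidef)
    (J : Matrix (Fin n ⊕ Fin n) (Fin n ⊕ Fin n) ℝ)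
    (hJ : J = Matrix.fromBlocks 0 (-1) 1 0)
    (v : ℝ → EuclideanSpace ℝ (Fin n ⊕ Fin n))
    (hode : ∀ x : ℝ, 1 < x →
      HasDerivAt v
        (WithLp.toLp 2 (x⁻¹ • (J.mulVec ((x • Ω₁ + Ω₀ + α • J + x⁻¹ • Ωₘ).mulVec (v x))))) x)
    (hbdd : ∃ C : ℝ, ∀ x : ℝ, 1 < x → ‖x ^ α • v x‖ ≤ C)
    (hbdd' : ∃ C : ℝ, ∀ x : ℝ, 1 < x → ‖x ^ (α - 1) • v x‖ ≤ C)
    (hL2 : IntegrableOn (fun x : ℝ => ‖x ^ α • v x‖ ^ 2) (Ioi (1 : ℝ)))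
    (hL2' : IntegrableOn (fun x : ℝ => ‖x ^ (α - 1) • v x‖ ^ 2) (Ioi (1 : ℝ)))
    (hdecay : Tendsto (fun x : ℝ => ‖x ^ α • v x‖) atTop (nhds 0)) :
    ∀ x y : ℝ, 1 < x → 1 < y → x ≠ y →
      (x * y) ^ ((2 * α + 1) / 2) * ((J.mulVec (v x)) ⬝ᵥ (v y)) / (x - y) =
        ∫ t in Ioi (1 : ℝ),
          (t ^ (2 * α) * (x * y) ^ ((2 * α + 1) / 2) *
              ((Ω₁.mulVec (v (t * x))) ⬝ᵥ (v (t * y)))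
            - t ^ (2 * α - 2) * (x * y) ^ ((2 * α - 1) / 2) *
              ((Ωₘ.mulVec (v (t * x))) ⬝ᵥ (v (t * y)))) :=
  integrable_kernel_multiplicative_hankel_factorization_general n α Ω₁ Ω₀ Ωₘ hΩ₁symm hΩ₀symm hΩₘsymm
    J hJ v hode hL2 hL2' hdecay
end
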